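/- (Corollary 1 of the paper: dual relations in the non-degenerate case.) Suppose multipliers λ_{0,i}, λ_{N_i,i}, λ_{tc,i} (i = 0,…,p−1), λ_{0,p} and λ̂_{−1},…,λ̂_{p−1} satisfy the relations λ_{0,p} = λ̂_{p−1}; λ_{0,i} = λ̂_{i−1} − A_{c,i}ᵀ(λ_{tc,i} + λ̂_i); T_{c,i}ᵀ(λ_{tc,i} + λ̂_i) = 0; and λ_{N_i,i} = −λ_{tc,i} for all i = 0,…,p−1. If moreover each T_{c,i} ∈ ℝ^{nx×nx} is invertible (which holds when the controllability matrix 𝒮_i of subproblem i has full row rank nx and the columns of T_{c,i} form a basis of its range), then: λ_{0,i} = λ̂_{i−1} for all i = 0,…,p; λ_{tc,i} = −λ̂_i = −λ_{0,i+1} for i = 0,…,p−1; and λ_{N_i,i} = −λ_{tc,i} = λ_{0,i+1} for i = 0,…,p−1. -/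
import Mathlib


open Matrix

/-- **Dual relations in the non-degenerate case (Corollary 1).**
Here `lamhat i` encodes `λ̂_{i−1}` (so `lamhat 0 = λ̂_{−1}` and
`lamhat (i+1) = λ̂_i`). If the multipliers satisfy the relations of Theorem 3 and
each `T_{c,i}` is invertible (as holds when the segment controllability matrix has
full row rank and the columns of `T_{c,i}` form a basis of its range), then
`λ_{0,i} = λ̂_{i−1}` for all `i ≤ p`, `λ_{tc,i} = −λ̂_i = −λ_{0,i+1}` and
`λ_{N_i,i} = −λ_{tc,i} = λ_{0,i+1}` for `i < p`. -/
theorem split_mpc_dual_relations_nondegenerate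
    (p nx : ℕ) (hp : 1 ≤ p)
    (Ac : ℕ → Matrix (Fin nx) (Fin nx) ℝ)
    (Tc : ℕ → Matrix (Fin nx) (Fin nx) ℝ)
    (lam0 lamN lamtc lamhat : ℕ → Fin nx → ℝ)
    (hTc : ∀ i < p, IsUnit (Tc i))
    (h1 : lam0 p = lamhat p)
    (h2 : ∀ i < p, lam0 i = lamhat i - (Ac i)ᵀ *ᵥ (lamtc i + lamhat (i + 1)))
    (h3 : ∀ i < p, (Tc i)ᵀ *ᵥ (lamtc i + lamhat (i + 1)) = 0)
    (h4 : ∀ i < p, lamN i = -(lamtc i)) :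
    (∀ i ≤ p, lam0 i = lamhat i) ∧
    (∀ i < p, lamtc i = -(lamhat (i + 1)) ∧ lamtc i = -(lam0 (i + 1))) ∧
    (∀ i < p, lamN i = -(lamtc i) ∧ lamN i = lam0 (i + 1)) := by
  have key : ∀ i < p, lamtc i + lamhat (i + 1) = 0 := by
    intro i hi
    have hu : IsUnit (Tc i)ᵀ := (Matrix.isUnit_iff_isUnit_det _).mpr (by simpa [Matrix.det_transpose] using (Matrix.isUnit_iff_isUnit_det _).mp (hTc i hi))
    have := congrArg (fun v => ((Tc i)ᵀ)⁻¹ *ᵥ v) (h3 i hi)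
    simpa [Matrix.mulVec_mulVec, Matrix.nonsing_inv_mul _ ((Matrix.isUnit_iff_isUnit_det _).mp hu)] using this
  have h0 : ∀ i ≤ p, lam0 i = lamhat i := by
    intro i hi
    rcases eq_or_lt_of_le hi with rfl | hi
    · exact h1
    · rw [h2 i hi, key i hi]; simp
  refine ⟨h0, ?_, ?_⟩
  · intro i hi
    have hk := key i hi
    have h1' : lamtc i = -(lamhat (i + 1)) := by
      have := congrArg (fun v => v - lamhat (i+1)) hk
      simpa [sub_eq_iff_eq_add, neg_add_eq_sub] using this
    exact ⟨h1', by rw [h1', h0 (i+1) hi]⟩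
  · intro i hi
    have hk := key i hi
    have h1' : lamtc i = -(lamhat (i + 1)) := by
      have := congrArg (fun v => v - lamhat (i+1)) hk
      simpa [sub_eq_iff_eq_add, neg_add_eq_sub] using this
    refine ⟨h4 i hi, ?_⟩
    rw [h4 i hi, h1', h0 (i+1) hi, neg_neg]
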